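/- If H is a {1,2}-graph and the order of its maximum complete {1,2}-subgraph is t, where t ≥ 2, then λ'(H) = λ'(K_t^{{1,2}}) = 2 - 1/t. -/

import Mathlib

open Finset

/-- λ'(H,x) = Σ_{e∈E} |e|! · ∏_{i∈e} x_i  (equals Σ_{j∈R(H)} j!·Σ_{|e|=j} ∏ x_i). -/
noncomputable def lagPoly {n : ℕ} (E : Finset (Finset (Fin n))) (x : Fin n → ℝ) : ℝ :=
  ∑ e ∈ E, (Nat.factorial e.card : ℝ) * ∏ i ∈ e, x i

/-- A legal weighting: nonnegative entries summing to 1. -/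
def isLegal {n : ℕ} (x : Fin n → ℝ) : Prop :=
  (∑ i, x i) = 1 ∧ ∀ i, 0 ≤ x i

/-- The Lagrangian λ'(H): the maximum of λ'(H,x) over legal weightings. -/
noncomputable def lagrangian {n : ℕ} (E : Finset (Finset (Fin n))) : ℝ :=
  sSup {v : ℝ | ∃ x : Fin n → ℝ, isLegal x ∧ lagPoly E x = v}

/-- Edge set of the complete hypergraph K_t^R on vertex set [t]. -/
def completeEdges (t : ℕ) (R : Finset ℕ) : Finset (Finset (Fin t)) :=
  Finset.univ.filter (fun e => e.card ∈ R)

/-- S induces a complete R-subgraph: every subset of S with cardinality in R is an edge. -/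
def isCompleteSub {n : ℕ} (E : Finset (Finset (Fin n))) (R : Finset ℕ) (S : Finset (Fin n)) : Prop :=
  ∀ e ⊆ S, e.card ∈ R → e ∈ E

/-- The maximum complete R-subgraph of H has order t. -/
def maxCompleteOrder {n : ℕ} (E : Finset (Finset (Fin n))) (R : Finset ℕ) (t : ℕ) : Prop :=
  (∃ S, S.card = t ∧ isCompleteSub E R S) ∧ ∀ S, isCompleteSub E R S → S.card ≤ t

/-!
A weighting that is uniform on a maximum complete `{1,2}`-subgraph of order `t` gives
`1 + 2·C(t,2)/t² = 2 - 1/t`. Conversely, if two vertices `i ≠ j` carrying loops and positive weight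
are not adjacent, no edge contains both, so `λ'` is affine along `x + s(eᵢ - eⱼ)`; moving all of
the weight of `j` onto `i` or vice versa does not decrease `λ'`, and it shrinks the set of weighted
looped vertices. Once that set `S` is a complete subgraph, `|S| ≤ t`, and with `s = ∑_{S} xᵢ`,
`Q = ∑ xᵢ²` we get `λ' ≤ s + (1 - Q) ≤ 1 + s - s²/t ≤ 2 - 1/t` by Cauchy–Schwarz.
-/

open Finset

section Algebra

variable {ι : Type*} [DecidableEq ι]

lemma sum_offDiag_mul_eq {R : Type*} [CommRing R] (s : Finset ι) (x : ι → R) :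
    ∑ p ∈ s.offDiag, x p.1 * x p.2 = (∑ i ∈ s, x i) ^ 2 - ∑ i ∈ s, x i ^ 2 := by
  rw [sq, sum_mul_sum, ← sum_product', ← diag_union_offDiag,
    sum_union (disjoint_diag_offDiag s), sum_diag]
  simp only [sq, add_sub_cancel_left]

lemma two_mul_prod_eq_sum_offDiag {R : Type*} [CommRing R] {e : Finset ι} (he : #e = 2)
    (x : ι → R) : 2 * ∏ i ∈ e, x i = ∑ p ∈ e.offDiag, x p.1 * x p.2 := by
  obtain ⟨a, b, hab, rfl⟩ := card_eq_two.1 he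
  rw [sum_offDiag_mul_eq, prod_pair hab, sum_pair hab, sum_pair hab]
  ring

lemma sum_two_mul_prod_le [Fintype ι] {E : Finset (Finset ι)} (hE : ∀ e ∈ E, #e = 2)
    {x : ι → ℝ} (hx : ∀ i, 0 ≤ x i) :
    ∑ e ∈ E, 2 * ∏ i ∈ e, x i ≤ (∑ i, x i) ^ 2 - ∑ i, x i ^ 2 := by
  have hdisj : (E : Set (Finset ι)).PairwiseDisjoint offDiag := by
    intro e he f hf hef
    refine disjoint_left.2 fun p hpe hpf => hef ?_
    have hpair : ∀ g ∈ E, p ∈ g.offDiag → {p.1, p.2} = g := fun g hg hpg => by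
      obtain ⟨h1, h2, h12⟩ := mem_offDiag.1 hpg
      refine eq_of_subset_of_card_le (insert_subset h1 (singleton_subset_iff.2 h2)) ?_
      rw [hE g hg, card_pair h12]
    rw [← hpair e he hpe, hpair f hf hpf]
  rw [sum_congr rfl fun e he => two_mul_prod_eq_sum_offDiag (hE e he) x, ← sum_biUnion hdisj,
    ← sum_offDiag_mul_eq]
  refine sum_le_sum_of_subset_of_nonneg (fun p hp => ?_) fun p _ _ => mul_nonneg (hx _) (hx _)
  obtain ⟨e, -, hpe⟩ := mem_biUnion.1 hp
  exact mem_offDiag.2 ⟨mem_univ _, mem_univ _, (mem_offDiag.1 hpe).2.2⟩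

lemma prod_add_mul_eq_of_eqOn_erase {e : Finset ι} {a : ι} {y z : ι → ℝ}
    (hyz : ∀ k ∈ e, k ≠ a → y k = z k) {p q : ℝ} (hpq : p + q = 1) :
    ∏ k ∈ e, (p * y k + q * z k) = p * ∏ k ∈ e, y k + q * ∏ k ∈ e, z k := by
  have hrest : ∀ k ∈ e.erase a, p * y k + q * z k = z k ∧ y k = z k := fun k hk => by
    rw [hyz k (mem_of_mem_erase hk) (ne_of_mem_erase hk), ← add_mul, hpq, one_mul]
    exact ⟨rfl, rfl⟩
  by_cases ha : a ∈ e
  · rw [← mul_prod_erase e _ ha, ← mul_prod_erase e y ha, ← mul_prod_erase e z ha,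
      prod_congr rfl fun k hk => (hrest k hk).1, prod_congr rfl fun k hk => (hrest k hk).2]
    ring
  · rw [erase_eq_of_notMem ha] at hrest
    rw [prod_congr rfl fun k hk => (hrest k hk).1, prod_congr rfl fun k hk => (hrest k hk).2,
      ← add_mul, hpq, one_mul]

end Algebra

section Lagrangian

variable {n : ℕ}

lemma lagPoly_mono {E F : Finset (Finset (Fin n))} (hEF : E ⊆ F) {x : Fin n → ℝ}
    (hx : ∀ i, 0 ≤ x i) : lagPoly E x ≤ lagPoly F x :=
  sum_le_sum_of_subset_of_nonneg hEF fun _ _ _ =>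
    mul_nonneg (Nat.cast_nonneg _) (prod_nonneg fun i _ => hx i)

lemma lagPoly_union {E F : Finset (Finset (Fin n))} (h : Disjoint E F) (x : Fin n → ℝ) :
    lagPoly (E ∪ F) x = lagPoly E x + lagPoly F x :=
  sum_union h

lemma lagPoly_add_mul_eq {E : Finset (Finset (Fin n))} {y z : Fin n → ℝ}
    (hyz : ∀ e ∈ E, ∃ a, ∀ k ∈ e, k ≠ a → y k = z k) {p q : ℝ} (hpq : p + q = 1) :
    lagPoly E (fun k => p * y k + q * z k) = p * lagPoly E y + q * lagPoly E z := by
  simp only [lagPoly, mul_sum, ← sum_add_distrib]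
  refine sum_congr rfl fun e he => ?_
  obtain ⟨a, ha⟩ := hyz e he
  rw [prod_add_mul_eq_of_eqOn_erase ha hpq]
  ring

section UniformWeight

noncomputable def uniformWeight (S : Finset (Fin n)) : Fin n → ℝ :=
  fun i => if i ∈ S then (#S : ℝ)⁻¹ else 0

lemma uniformWeight_of_mem {S : Finset (Fin n)} {i : Fin n} (hi : i ∈ S) :
    uniformWeight S i = (#S : ℝ)⁻¹ :=
  if_pos hi

lemma isLegal_uniformWeight {S : Finset (Fin n)} (hS : S.Nonempty) :
    isLegal (uniformWeight S) := by
  refine ⟨?_, fun i => ?_⟩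
  · simp only [uniformWeight]
    rw [sum_ite_mem, univ_inter, sum_const, nsmul_eq_mul,
      mul_inv_cancel₀ (Nat.cast_ne_zero.2 hS.card_ne_zero)]
  · unfold uniformWeight
    split_ifs <;> positivity

lemma lagPoly_powersetCard_uniformWeight (S : Finset (Fin n)) (k : ℕ) :
    lagPoly (S.powersetCard k) (uniformWeight S) = (#S).descFactorial k / (#S : ℝ) ^ k := by
  have hterm : ∀ e ∈ S.powersetCard k,
      ((#e).factorial : ℝ) * ∏ i ∈ e, uniformWeight S i = k.factorial * (#S : ℝ)⁻¹ ^ k :=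
    fun e he => by
      obtain ⟨heS, hek⟩ := mem_powersetCard.1 he
      rw [prod_congr rfl fun i hi => uniformWeight_of_mem (heS hi), prod_const, hek]
  rw [lagPoly, sum_congr rfl hterm, sum_const, card_powersetCard, nsmul_eq_mul,
    Nat.descFactorial_eq_factorial_mul_choose]
  push_cast
  ring

lemma two_sub_inv_le_lagPoly_uniformWeight {E : Finset (Finset (Fin n))} {S : Finset (Fin n)}
    (hS : isCompleteSub E {1, 2} S) (hSne : S.Nonempty) :
    2 - 1 / (#S : ℝ) ≤ lagPoly E (uniformWeight S) := by
  have hsub : S.powersetCard 1 ∪ S.powersetCard 2 ⊆ E := fun e he => by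
    rcases mem_union.1 he with he | he <;>
    · obtain ⟨heS, hek⟩ := mem_powersetCard.1 he
      exact hS e heS (by simp [hek])
  calc 2 - 1 / (#S : ℝ)
      = lagPoly (S.powersetCard 1 ∪ S.powersetCard 2) (uniformWeight S) := by
        rw [lagPoly_union (S.pairwise_disjoint_powersetCard (by decide : 1 ≠ 2)),
          lagPoly_powersetCard_uniformWeight, lagPoly_powersetCard_uniformWeight,
          Nat.descFactorial_one, Nat.cast_descFactorial_two]
        field_simp
        ring
    _ ≤ lagPoly E (uniformWeight S) := lagPoly_mono hsub (isLegal_uniformWeight hSne).2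

end UniformWeight

section LoopSupport

noncomputable def loopSupport (E : Finset (Finset (Fin n))) (x : Fin n → ℝ) : Finset (Fin n) :=
  univ.filter fun i => {i} ∈ E ∧ x i ≠ 0

variable {E : Finset (Finset (Fin n))} {x : Fin n → ℝ}

lemma lagPoly_filter_card_one :
    lagPoly {e ∈ E | #e = 1} x = ∑ i ∈ loopSupport E x, x i := by
  rw [lagPoly, loopSupport, ← filter_filter, sum_filter_ne_zero]
  refine (sum_bij (fun i _ => {i}) (by simp) (fun _ _ _ _ => singleton_inj.1)
    (fun e he => ?_) (by simp)).symm
  obtain ⟨heE, he1⟩ := mem_filter.1 he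
  obtain ⟨a, rfl⟩ := card_eq_one.1 he1
  exact ⟨a, by simpa using heE, rfl⟩

lemma lagPoly_le_sum_loopSupport_add_one_sub (hE : ∀ e ∈ E, #e ∈ ({1, 2} : Finset ℕ))
    (hx : isLegal x) : lagPoly E x ≤ ∑ i ∈ loopSupport E x, x i + (1 - ∑ i, x i ^ 2) := by
  have hpairs : ∀ e ∈ {e ∈ E | ¬#e = 1}, #e = 2 := fun e he => by
    obtain ⟨heE, he1⟩ := mem_filter.1 he
    simpa [he1] using hE e heE
  have hpairs_le : lagPoly {e ∈ E | ¬#e = 1} x ≤ 1 - ∑ i, x i ^ 2 := by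
    have h := sum_two_mul_prod_le hpairs hx.2
    rw [hx.1, one_pow] at h
    refine le_of_eq_of_le (sum_congr rfl fun e he => ?_) h
    rw [hpairs e he, Nat.factorial_two, Nat.cast_two]
  calc lagPoly E x = lagPoly {e ∈ E | #e = 1} x + lagPoly {e ∈ E | ¬#e = 1} x :=
        (sum_filter_add_sum_filter_not _ _ _).symm
    _ ≤ ∑ i ∈ loopSupport E x, x i + (1 - ∑ i, x i ^ 2) := by
        rw [lagPoly_filter_card_one]
        exact add_le_add_right hpairs_le _

lemma lagPoly_le_of_card_loopSupport_le {t : ℕ} (ht : 2 ≤ t)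
    (hE : ∀ e ∈ E, #e ∈ ({1, 2} : Finset ℕ)) (hx : isLegal x) (hS : #(loopSupport E x) ≤ t) :
    lagPoly E x ≤ 2 - 1 / t := by
  set s := ∑ i ∈ loopSupport E x, x i
  set Q := ∑ i, x i ^ 2
  have hs1 : s ≤ 1 := hx.1 ▸ sum_le_sum_of_subset_of_nonneg (subset_univ _) fun i _ _ => hx.2 i
  have hsQ : s ^ 2 ≤ t * Q := calc
    s ^ 2 ≤ #(loopSupport E x) * ∑ i ∈ loopSupport E x, x i ^ 2 := sq_sum_le_card_mul_sum_sq
    _ ≤ t * Q := by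
      gcongr
      exact sum_le_sum_of_subset_of_nonneg (subset_univ _) fun i _ _ => sq_nonneg _
  have htR : (2 : ℝ) ≤ t := by exact_mod_cast ht
  have hkey : s + (1 - Q) ≤ 2 - 1 / t := by
    rw [← sub_nonneg]
    have : 0 ≤ (1 - s) * (t - 1 - s) := mul_nonneg (by linarith) (by linarith)
    have : (2 - 1 / t - (s + (1 - Q))) * t = (1 - s) * (t - 1 - s) + (t * Q - s ^ 2) := by
      field_simp
      ring
    nlinarith
  exact (lagPoly_le_sum_loopSupport_add_one_sub hE hx).trans hkey

end LoopSupport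

section MoveWeight

noncomputable def moveWeight (x : Fin n → ℝ) (j i : Fin n) : Fin n → ℝ :=
  x + Pi.single i (x j) - Pi.single j (x j)

variable {x : Fin n → ℝ} {i j : Fin n}

lemma moveWeight_apply_src (hij : i ≠ j) : moveWeight x j i j = 0 := by
  simp [moveWeight, hij.symm]

lemma moveWeight_apply_dst (hij : i ≠ j) : moveWeight x j i i = x i + x j := by
  simp [moveWeight, hij]

lemma moveWeight_apply_of_ne {k : Fin n} (hki : k ≠ i) (hkj : k ≠ j) :
    moveWeight x j i k = x k := by
  simp [moveWeight, hki, hkj]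

lemma isLegal_moveWeight (hx : isLegal x) (hij : i ≠ j) : isLegal (moveWeight x j i) := by
  refine ⟨by simp [moveWeight, sum_sub_distrib, sum_add_distrib, hx.1], fun k => ?_⟩
  by_cases hki : k = i
  · rw [hki, moveWeight_apply_dst hij]
    exact add_nonneg (hx.2 i) (hx.2 j)
  by_cases hkj : k = j
  · rw [hkj, moveWeight_apply_src hij]
  · rw [moveWeight_apply_of_ne hki hkj]
    exact hx.2 k

lemma card_loopSupport_moveWeight_lt {E : Finset (Finset (Fin n))} (hij : i ≠ j) (hxi : x i ≠ 0)
    (hj : j ∈ loopSupport E x) : #(loopSupport E (moveWeight x j i)) < #(loopSupport E x) := by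
  refine card_lt_card ⟨fun k hk => ?_, fun h => ?_⟩
  · simp only [loopSupport, mem_filter, mem_univ, true_and] at hk ⊢
    refine ⟨hk.1, ?_⟩
    by_cases hki : k = i
    · exact hki ▸ hxi
    by_cases hkj : k = j
    · subst hkj
      exact absurd (moveWeight_apply_src hij) hk.2
    · rw [moveWeight_apply_of_ne hki hkj] at hk
      exact hk.2
  · have := h hj
    simp [loopSupport, moveWeight_apply_src hij] at this

lemma eq_add_mul_moveWeight (hij : i ≠ j) (hsum : x i + x j ≠ 0) :
    x = fun k =>
      x i / (x i + x j) * moveWeight x j i k + x j / (x i + x j) * moveWeight x i j k := by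
  funext k
  by_cases hki : k = i
  · subst hki
    rw [moveWeight_apply_dst hij, moveWeight_apply_src hij.symm]
    field_simp
    ring
  by_cases hkj : k = j
  · subst hkj
    rw [moveWeight_apply_src hij, moveWeight_apply_dst hij.symm]
    field_simp
    ring
  · rw [moveWeight_apply_of_ne hki hkj, moveWeight_apply_of_ne hkj hki]
    field_simp

end MoveWeight

variable {E : Finset (Finset (Fin n))}

lemma exists_lagPoly_ge_card_loopSupport_lt {x : Fin n → ℝ} {i j : Fin n} (hx : isLegal x)
    (hi : i ∈ loopSupport E x) (hj : j ∈ loopSupport E x) (hij : i ≠ j)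
    (hE : ∀ e ∈ E, ¬{i, j} ⊆ e) :
    ∃ y, isLegal y ∧ #(loopSupport E y) < #(loopSupport E x) ∧ lagPoly E x ≤ lagPoly E y := by
  have hxi : x i ≠ 0 := (mem_filter.1 hi).2.2
  have hxj : x j ≠ 0 := (mem_filter.1 hj).2.2
  have hpos : 0 < x i + x j :=
    add_pos ((hx.2 i).lt_of_ne hxi.symm) ((hx.2 j).lt_of_ne hxj.symm)
  set p := x i / (x i + x j)
  set q := x j / (x i + x j)
  have hpq : p + q = 1 := by rw [← add_div, div_self hpos.ne']
  have hagree : ∀ e ∈ E, ∃ a, ∀ k ∈ e, k ≠ a → moveWeight x j i k = moveWeight x i j k := by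
    intro e he
    by_cases hje : j ∈ e
    · have hie : i ∉ e := fun hie => hE e he (insert_subset hie (singleton_subset_iff.2 hje))
      exact ⟨j, fun k hk hkj => by
        rw [moveWeight_apply_of_ne (ne_of_mem_of_not_mem hk hie) hkj,
          moveWeight_apply_of_ne hkj (ne_of_mem_of_not_mem hk hie)]⟩
    · exact ⟨i, fun k hk hki => by
        rw [moveWeight_apply_of_ne hki (ne_of_mem_of_not_mem hk hje),
          moveWeight_apply_of_ne (ne_of_mem_of_not_mem hk hje) hki]⟩
  have hsplit :
      lagPoly E x = p * lagPoly E (moveWeight x j i) + q * lagPoly E (moveWeight x i j) := by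
    rw [← lagPoly_add_mul_eq hagree hpq, ← eq_add_mul_moveWeight hij hpos.ne']
  have hp : 0 ≤ p := div_nonneg (hx.2 i) hpos.le
  have hq : 0 ≤ q := div_nonneg (hx.2 j) hpos.le
  have hmax :
      lagPoly E x ≤ max (lagPoly E (moveWeight x j i)) (lagPoly E (moveWeight x i j)) := by
    rw [hsplit]
    exact Convex.combo_le_max _ _ hp hq hpq
  rcases le_total (lagPoly E (moveWeight x j i)) (lagPoly E (moveWeight x i j)) with hle | hle
  · exact ⟨_, isLegal_moveWeight hx hij.symm, card_loopSupport_moveWeight_lt hij.symm hxj hi,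
      max_eq_right hle ▸ hmax⟩
  · exact ⟨_, isLegal_moveWeight hx hij, card_loopSupport_moveWeight_lt hij hxi hj,
      max_eq_left hle ▸ hmax⟩

lemma exists_pair_not_subset_of_not_isCompleteSub {x : Fin n → ℝ}
    (hE : ∀ e ∈ E, #e ∈ ({1, 2} : Finset ℕ))
    (hS : ¬isCompleteSub E {1, 2} (loopSupport E x)) :
    ∃ i ∈ loopSupport E x, ∃ j ∈ loopSupport E x, i ≠ j ∧ ∀ e ∈ E, ¬{i, j} ⊆ e := by
  simp only [isCompleteSub, not_forall] at hS
  obtain ⟨e, heS, he12, heE⟩ := hS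
  rcases mem_insert.1 he12 with he1 | he2
  · obtain ⟨a, rfl⟩ := card_eq_one.1 he1
    exact absurd (mem_filter.1 (heS (mem_singleton_self a))).2.1 heE
  obtain ⟨a, b, hab, rfl⟩ := card_eq_two.1 (mem_singleton.1 he2)
  refine ⟨a, heS (by simp), b, heS (by simp), hab, fun f hf hsub => heE ?_⟩
  have hf2 : #f ≤ #{a, b} := by
    have := hE f hf
    simp only [mem_insert, mem_singleton] at this
    rw [card_pair hab]
    omega
  exact eq_of_subset_of_card_le hsub hf2 ▸ hf

theorem lagPoly_le_two_sub_inv {t : ℕ} (ht : 2 ≤ t) (hE : ∀ e ∈ E, #e ∈ ({1, 2} : Finset ℕ))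
    (hmax : ∀ S, isCompleteSub E {1, 2} S → #S ≤ t) {x : Fin n → ℝ} (hx : isLegal x) :
    lagPoly E x ≤ 2 - 1 / t := by
  induction hm : #(loopSupport E x) using Nat.strong_induction_on generalizing x with
  | _ m ih =>
  by_cases hS : isCompleteSub E {1, 2} (loopSupport E x)
  · exact lagPoly_le_of_card_loopSupport_le ht hE hx (hmax _ hS)
  · obtain ⟨i, hi, j, hj, hij, hpair⟩ := exists_pair_not_subset_of_not_isCompleteSub hE hS
    obtain ⟨y, hy, hlt, hle⟩ := exists_lagPoly_ge_card_loopSupport_lt hx hi hj hij hpair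
    exact hle.trans (ih _ (hm ▸ hlt) hy rfl)

theorem lagrangian_eq_two_sub_inv {t : ℕ} (ht : 2 ≤ t) (hE : ∀ e ∈ E, #e ∈ ({1, 2} : Finset ℕ))
    (hmax : maxCompleteOrder E {1, 2} t) : lagrangian E = 2 - 1 / t := by
  obtain ⟨⟨S, rfl, hS⟩, hle⟩ := hmax
  have hSne : S.Nonempty := card_pos.1 (by omega)
  have hlegal := isLegal_uniformWeight hSne
  refine IsGreatest.csSup_eq ⟨⟨_, hlegal, le_antisymm (lagPoly_le_two_sub_inv ht hE hle hlegal)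
    (two_sub_inv_le_lagPoly_uniformWeight hS hSne)⟩, ?_⟩
  rintro _ ⟨x, hx, rfl⟩
  exact lagPoly_le_two_sub_inv ht hE hle hx

lemma maxCompleteOrder_completeEdges (t : ℕ) (R : Finset ℕ) :
    maxCompleteOrder (completeEdges t R) R t :=
  ⟨⟨univ, card_fin t, fun e _ he => mem_filter.2 ⟨mem_univ e, he⟩⟩,
    fun S _ => (card_le_univ S).trans_eq (Fintype.card_fin t)⟩

end Lagrangian

/-- Motzkin–Straus type theorem for {1,2}-graphs (Peng et al., Theorem 5 of the paper). -/
theorem lagrangian_one_two_graph (t n : ℕ) (ht : 2 ≤ t)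
    (E : Finset (Finset (Fin n)))
    (hR : E.image Finset.card = ({1, 2} : Finset ℕ))
    (hmax : maxCompleteOrder E ({1, 2} : Finset ℕ) t) :
    lagrangian E = lagrangian (completeEdges t ({1, 2} : Finset ℕ)) ∧
    lagrangian (completeEdges t ({1, 2} : Finset ℕ)) = 2 - 1 / (t : ℝ) := by
  have hE : ∀ e ∈ E, #e ∈ ({1, 2} : Finset ℕ) := fun e he => hR ▸ mem_image_of_mem _ he
  have hK : lagrangian (completeEdges t {1, 2}) = 2 - 1 / (t : ℝ) :=
    lagrangian_eq_two_sub_inv ht (fun e he => (mem_filter.1 he).2)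
      (maxCompleteOrder_completeEdges t {1, 2})
  exact ⟨(lagrangian_eq_two_sub_inv ht hE hmax).trans hK.symm, hK⟩
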